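/- arXiv:2409.14625 — 2 statements merged into one kernel-verified Lean document; each statement's English description precedes it below -/
import Mathlib

section
/- Let E and F be Banach lattices with F Dedekind complete. If every positive operator T: E → F attains its norm, then the set B = { x ⊗ y* : x a positive norm-one element of E, y* a positive norm-one functional on F } is an absolutely James boundary of the space L^r(E;F) of regular operators with the regular norm; that is, for every T in L^r(E;F) with regular norm 1 there exists f in B with |f|(|T|) = 1. -/
open Filter Topology NormedSpace

/-- `dAbs f x` represents `|f|(x)` for a functional `f` on a Banach lattice,
via the Riesz–Kantorovich formula `|f|(x) = sup { f y : |y| ≤ x }` (for `x ≥ 0`). -/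
noncomputable def dAbs {E : Type*} [NormedAddCommGroup E] [Lattice E] [HasSolidNorm E] [IsOrderedAddMonoid E] [NormedSpace ℝ E]
    (f : E →L[ℝ] ℝ) (x : E) : ℝ :=
  sSup (f '' {y | |y| ≤ x})

/-- A bounded operator between Banach lattices is positive. -/
def IsPosOp {E F : Type*} [NormedAddCommGroup E] [Lattice E] [HasSolidNorm E] [IsOrderedAddMonoid E] [NormedSpace ℝ E]
    [NormedAddCommGroup F] [Lattice F] [HasSolidNorm F] [IsOrderedAddMonoid F] [NormedSpace ℝ F] (T : E →L[ℝ] F) : Prop :=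
  ∀ x : E, 0 ≤ x → 0 ≤ T x

/-- The order `T ≤ S` between operators: `T x ≤ S x` for all positive `x`. -/
def OpLe {E F : Type*} [NormedAddCommGroup E] [Lattice E] [HasSolidNorm E] [IsOrderedAddMonoid E] [NormedSpace ℝ E]
    [NormedAddCommGroup F] [Lattice F] [HasSolidNorm F] [IsOrderedAddMonoid F] [NormedSpace ℝ F] (T S : E →L[ℝ] F) : Prop :=
  ∀ x : E, 0 ≤ x → T x ≤ S x

/-- `m` is the modulus `|T|` of a regular operator `T`: the least upper bound
of `T` and `-T` in the operator order. -/
def IsModulus {E F : Type*} [NormedAddCommGroup E] [Lattice E] [HasSolidNorm E] [IsOrderedAddMonoid E] [NormedSpace ℝ E]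
    [NormedAddCommGroup F] [Lattice F] [HasSolidNorm F] [IsOrderedAddMonoid F] [NormedSpace ℝ F] (T m : E →L[ℝ] F) : Prop :=
  OpLe T m ∧ OpLe (-T) m ∧ ∀ S : E →L[ℝ] F, OpLe T S → OpLe (-T) S → OpLe m S


/-!
The modulus `|T|` is a positive operator, so by hypothesis it attains its norm at a unit
vector `x`; since `‖|T| x‖ ≤ ‖|T| |x|‖` it attains it at `|x| ≥ 0` too. A positive functional
norming the positive element `|T| |x|` comes from Hahn–Banach with the sublinear bound
`z ↦ ‖z⁺‖`, which vanishes on the negative cone.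
-/

section LatticeOrderedGroup

variable {α : Type*} [AddCommGroup α] [Lattice α] [IsOrderedAddMonoid α]

lemma nonneg_of_two_pow_nsmul_nonneg {n : ℕ} {a : α} (h : 0 ≤ 2 ^ n • a) : 0 ≤ a := by
  induction n generalizing a with
  | zero => simpa using h
  | succ n ih => exact nsmul_two_semiclosed (ih (by rwa [pow_succ', mul_nsmul] at h))

end LatticeOrderedGroup

section NormedLattice

variable {E : Type*} [NormedAddCommGroup E] [Lattice E] [HasSolidNorm E] [IsOrderedAddMonoid E]

lemma norm_le_norm_of_nonneg_of_le {a b : E} (ha : 0 ≤ a) (hab : a ≤ b) : ‖a‖ ≤ ‖b‖ :=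
  norm_le_norm_of_abs_le_abs (by rwa [abs_of_nonneg ha, abs_of_nonneg (ha.trans hab)])

lemma norm_posPart_add_le (z w : E) : ‖(z + w)⁺‖ ≤ ‖z⁺‖ + ‖w⁺‖ :=
  calc ‖(z + w)⁺‖ ≤ ‖z⁺ + w⁺‖ :=
        norm_le_norm_of_nonneg_of_le (posPart_nonneg _) <| sup_le
          (add_le_add (le_posPart z) (le_posPart w))
          (add_nonneg (posPart_nonneg z) (posPart_nonneg w))
    _ ≤ ‖z⁺‖ + ‖w⁺‖ := norm_add_le _ _

lemma norm_posPart_le (z : E) : ‖z⁺‖ ≤ ‖z‖ := by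
  simpa only [norm_abs_eq_norm] using
    norm_le_norm_of_nonneg_of_le (posPart_nonneg z) (sup_le (le_abs_self z) (abs_nonneg z))

variable [NormedSpace ℝ E]

/-- The positive cone is closed and stable under halving, and every `c ≥ 0` is a limit of
dyadic rationals `⌊c 2ⁿ⌋₊ / 2ⁿ`. -/
instance HasSolidNorm.posSMulMono : PosSMulMono ℝ E := by
  refine PosSMulMono.of_smul_nonneg fun c hc z hz => ?_
  have dyadic (k n : ℕ) : 0 ≤ ((k : ℝ) / 2 ^ n) • z := by
    refine nonneg_of_two_pow_nsmul_nonneg (n := n) ?_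
    rw [← Nat.cast_smul_eq_nsmul ℝ, smul_smul, Nat.cast_pow, Nat.cast_ofNat,
      mul_div_cancel₀ _ (by positivity), Nat.cast_smul_eq_nsmul]
    exact nsmul_nonneg hz k
  have hlim : Tendsto (fun n : ℕ => (⌊c * 2 ^ n⌋₊ : ℝ) / 2 ^ n) atTop (𝓝 c) :=
    (tendsto_nat_floor_mul_div_atTop hc).comp (tendsto_pow_atTop_atTop_of_one_lt one_lt_two)
  exact (isClosed_le continuous_const (continuous_id.smul continuous_const)).mem_of_tendsto hlim
    (.of_forall fun n => dyadic _ n)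

lemma posPart_smul_of_pos {c : ℝ} (hc : 0 < c) (z : E) : (c • z)⁺ = c • z⁺ :=
  calc (c • z)⁺ = c • z ⊔ c • 0 := by rw [smul_zero]; rfl
    _ = c • z⁺ := ((OrderIso.smulRight hc).map_sup z 0).symm

lemma exists_linear_apply_eq_norm_le_norm_posPart {a : E} (ha₀ : 0 ≤ a) (ha : a ≠ 0) :
    ∃ g : E →ₗ[ℝ] ℝ, g a = ‖a‖ ∧ ∀ z, g z ≤ ‖z⁺‖ := by
  let f : E →ₗ.[ℝ] ℝ := LinearPMap.mkSpanSingleton a ‖a‖ ha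
  have hf : ∀ z : f.domain, f z ≤ ‖(z : E)⁺‖ := by
    rintro ⟨_, hz⟩
    obtain ⟨c, rfl⟩ := Submodule.mem_span_singleton.mp hz
    rw [show f ⟨c • a, hz⟩ = c * ‖a‖ from LinearPMap.mkSpanSingleton'_apply _ _ _ c hz]
    rcases le_or_gt 0 c with hc | hc
    · rw [posPart_eq_self.mpr (smul_nonneg hc ha₀), norm_smul, Real.norm_of_nonneg hc]
    · exact (mul_nonpos_of_nonpos_of_nonneg hc.le (norm_nonneg a)).trans (norm_nonneg _)
  obtain ⟨g, hgf, hg⟩ := exists_extension_of_le_sublinear f (fun z => ‖z⁺‖)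
    (fun c hc z => by simp only [posPart_smul_of_pos hc, norm_smul, Real.norm_of_nonneg hc.le])
    norm_posPart_add_le hf
  refine ⟨g, ?_, hg⟩
  exact (hgf ⟨a, Submodule.mem_span_singleton_self a⟩).trans
    (LinearPMap.mkSpanSingleton_apply ℝ ℝ ha _)

theorem exists_nonneg_dual_apply_eq_norm {a : E} (ha₀ : 0 ≤ a) (ha : a ≠ 0) :
    ∃ y : E →L[ℝ] ℝ, (∀ z, 0 ≤ z → 0 ≤ y z) ∧ ‖y‖ = 1 ∧ y a = ‖a‖ := by
  obtain ⟨g, hga, hg⟩ := exists_linear_apply_eq_norm_le_norm_posPart ha₀ ha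
  have hg_bound (z : E) : ‖g z‖ ≤ 1 * ‖z‖ := by
    rw [one_mul, Real.norm_eq_abs, abs_le]
    refine ⟨?_, (hg z).trans (norm_posPart_le z)⟩
    exact neg_le.mpr (by simpa using (hg (-z)).trans (norm_posPart_le (-z)))
  let y := g.mkContinuous 1 hg_bound
  have hya : y a = ‖a‖ := hga
  refine ⟨y, fun z hz => ?_, ?_, hya⟩
  · show 0 ≤ g z
    simpa [posPart_eq_zero.mpr (neg_nonpos.mpr hz)] using hg (-z)
  · refine le_antisymm (g.mkContinuous_norm_le zero_le_one _) ?_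
    have hle : 1 * ‖a‖ ≤ ‖y‖ * ‖a‖ := by simpa [hya] using y.le_opNorm a
    exact le_of_mul_le_mul_right hle (norm_pos_iff.mpr ha)

end NormedLattice

section PositiveOperators

variable {E F : Type*}
  [NormedAddCommGroup E] [Lattice E] [HasSolidNorm E] [IsOrderedAddMonoid E] [NormedSpace ℝ E]
  [NormedAddCommGroup F] [Lattice F] [HasSolidNorm F] [IsOrderedAddMonoid F] [NormedSpace ℝ F]

lemma IsModulus.isPosOp {T m : E →L[ℝ] F} (hm : IsModulus T m) : IsPosOp m := fun x hx =>
  (abs_nonneg (T x)).trans (abs_le'.mpr ⟨hm.1 x hx, hm.2.1 x hx⟩)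

lemma IsPosOp.abs_apply_le {m : E →L[ℝ] F} (hm : IsPosOp m) (x : E) : |m x| ≤ m |x| := by
  refine abs_le'.mpr ⟨?_, ?_⟩
  · simpa using hm _ (sub_nonneg.mpr (le_abs_self x))
  · simpa [neg_le_iff_add_nonneg'] using hm _ (neg_le_iff_add_nonneg'.mp (neg_le_abs x))

lemma IsPosOp.norm_apply_abs_eq_opNorm {m : E →L[ℝ] F} (hm : IsPosOp m) {x : E} (hx : ‖x‖ = 1)
    (hmx : ‖m x‖ = ‖m‖) : ‖m |x|‖ = ‖m‖ := by
  refine le_antisymm (by simpa [norm_abs_eq_norm, hx] using m.le_opNorm |x|) ?_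
  rw [← hmx]
  refine norm_le_norm_of_abs_le_abs ?_
  rw [abs_of_nonneg (hm _ (abs_nonneg x))]
  exact hm.abs_apply_le x

end PositiveOperators

theorem tensor_absolutelyJamesBoundary_general {E F : Type*}
    [NormedAddCommGroup E] [Lattice E] [HasSolidNorm E] [IsOrderedAddMonoid E] [NormedSpace ℝ E]
    [NormedAddCommGroup F] [Lattice F] [HasSolidNorm F] [IsOrderedAddMonoid F] [NormedSpace ℝ F]
    (hatt : ∀ T : E →L[ℝ] F, IsPosOp T → ∃ x : E, ‖x‖ = 1 ∧ ‖T x‖ = ‖T‖)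
    (T m : E →L[ℝ] F) (hm : IsModulus T m) (hTr : ‖m‖ = 1) :
    ∃ (x : E) (y : F →L[ℝ] ℝ), 0 ≤ x ∧ ‖x‖ = 1 ∧
      (∀ z : F, 0 ≤ z → 0 ≤ y z) ∧ ‖y‖ = 1 ∧ y (m x) = 1 := by
  have hpos : IsPosOp m := hm.isPosOp
  obtain ⟨x, hx, hmx⟩ := hatt m hpos
  have hnorm : ‖m |x|‖ = 1 := hTr ▸ hpos.norm_apply_abs_eq_opNorm hx hmx
  obtain ⟨y, hy_pos, hy_norm, hy⟩ :=
    exists_nonneg_dual_apply_eq_norm (hpos _ (abs_nonneg x))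
      (norm_ne_zero_iff.mp (by simp [hnorm]))
  exact ⟨|x|, y, abs_nonneg x, by rwa [norm_abs_eq_norm], hy_pos, hy_norm, hy.trans hnorm⟩

/-- If every positive operator `E → F` (with `F` Dedekind complete) attains its norm, then the
set `{x ⊗ y* : x ∈ S_E⁺, y* ∈ S_{F*}⁺}` is an absolutely James boundary of `L^r(E;F)`:
for every `T` with regular norm `‖|T|‖ = 1` there is such a functional `f = x ⊗ y*` with
`|f|(|T|) = y*(|T| x) = 1`. -/
theorem tensor_absolutelyJamesBoundary {E F : Type*}
    [NormedAddCommGroup E] [Lattice E] [HasSolidNorm E] [IsOrderedAddMonoid E] [NormedSpace ℝ E] [CompleteSpace E]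
    [NormedAddCommGroup F] [Lattice F] [HasSolidNorm F] [IsOrderedAddMonoid F] [NormedSpace ℝ F] [CompleteSpace F]
    (hDed : ∀ A : Set F, A.Nonempty → BddAbove A → ∃ u : F, IsLUB A u)
    (hatt : ∀ T : E →L[ℝ] F, IsPosOp T → ∃ x : E, ‖x‖ = 1 ∧ ‖T x‖ = ‖T‖)
    (T m : E →L[ℝ] F) (hm : IsModulus T m) (hTr : ‖m‖ = 1) :
    ∃ (x : E) (y : F →L[ℝ] ℝ), 0 ≤ x ∧ ‖x‖ = 1 ∧
      (∀ z : F, 0 ≤ z → 0 ≤ y z) ∧ ‖y‖ = 1 ∧ y (m x) = 1 :=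
  tensor_absolutelyJamesBoundary_general hatt T m hm hTr
end

section
/- Let E be a reflexive Banach lattice whose order is given by a basis (or alternatively let F have order continuous norm with order given by a basis), with F Dedekind complete. If the unit ball of the positive compact operators from E to F is sequentially closed in the absolute strong operator topology, then every positive operator T: E → F is compact. -/
open Filter Topology NormedSpace

/-- The norm of `G` is order continuous: every downward-directed set with infimum `0`
contains elements of arbitrarily small norm. -/
def OrderContNorm (G : Type*) [NormedAddCommGroup G] [Lattice G] [HasSolidNorm G] [IsOrderedAddMonoid G] : Prop :=
  ∀ A : Set G, A.Nonempty → DirectedOn (· ≥ ·) A → IsGLB A 0 →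
    ∀ ε : ℝ, 0 < ε → ∃ a ∈ A, ‖a‖ < ε

/-- The order of `G` is given coordinatewise by the Schauder basis `b` with
coordinate functionals `c`. -/
def OrderBasis {G : Type*} [NormedAddCommGroup G] [Lattice G] [HasSolidNorm G] [IsOrderedAddMonoid G] [NormedSpace ℝ G]
    (b : ℕ → G) (c : ℕ → G →L[ℝ] ℝ) : Prop :=
  (∀ x : G, Filter.Tendsto (fun N => ∑ i ∈ Finset.range N, c i x • b i)
    Filter.atTop (nhds x)) ∧
  (∀ i j, c i (b j) = if i = j then (1 : ℝ) else 0) ∧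
  (∀ x : G, 0 ≤ x ↔ ∀ n, 0 ≤ c n x)

/-!
Since the order is given by a basis, the partial-sum projections `P_N` of the basis are positive,
finite rank, dominated by the identity on positive vectors and converge strongly to the identity.
Composing a positive `T` with them (on the right if the basis lives in `E`, on the left if it
lives in `F`) gives positive compact operators `S_N ≤ T` with `S_N → T` strongly. By
Banach–Steinhaus the `S_N` are uniformly bounded, so after scaling they lie in the unit ball of
the positive compact operators; and since `T - S_N ≥ 0`, the modulus of `S_N - T` is `T - S_N`,
which tends to `0` strongly. Sequential closedness of the ball in the absolute strong operator
topology then makes the scaled `T`, hence `T`, compact.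
-/

lemma nonneg_of_two_pow_nsmul_nonneg_s12 {α : Type*} [Lattice α] [AddCommGroup α]
    [IsOrderedAddMonoid α] {z : α} (k : ℕ) (h : 0 ≤ 2 ^ k • z) : 0 ≤ z := by
  induction k generalizing z with
  | zero => simpa using h
  | succ k ih =>
    rw [pow_succ', mul_nsmul] at h
    exact nsmul_two_semiclosed (ih h)

lemma inv_two_pow_smul_nonneg {α : Type*} [Lattice α] [AddCommGroup α] [IsOrderedAddMonoid α]
    [Module ℝ α] {y : α} (hy : 0 ≤ y) (k : ℕ) : 0 ≤ ((2 : ℝ) ^ k)⁻¹ • y := by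
  refine nonneg_of_two_pow_nsmul_nonneg_s12 k ?_
  rwa [← Nat.cast_smul_eq_nsmul ℝ, smul_smul, Nat.cast_pow, Nat.cast_ofNat,
    mul_inv_cancel₀ (by positivity), one_smul]

lemma isCompactOperator_smulRight {E F : Type*} [NormedAddCommGroup E] [NormedSpace ℝ E]
    [NormedAddCommGroup F] [NormedSpace ℝ F] (c : E →L[ℝ] ℝ) (v : F) :
    IsCompactOperator (c.smulRight v) :=
  (isCompactOperator_of_locallyCompactSpace_dom c).clm_comp
    ((ContinuousLinearMap.id ℝ ℝ).smulRight v)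

section BasisProjection

variable {G : Type*} [NormedAddCommGroup G] [NormedSpace ℝ G] {b : ℕ → G} {c : ℕ → G →L[ℝ] ℝ}

noncomputable def basisProj (b : ℕ → G) (c : ℕ → G →L[ℝ] ℝ) (N : ℕ) : G →L[ℝ] G :=
  ∑ i ∈ Finset.range N, (c i).smulRight (b i)

lemma basisProj_apply (N : ℕ) (x : G) :
    basisProj b c N x = ∑ i ∈ Finset.range N, c i x • b i := by
  simp [basisProj]

lemma isCompactOperator_basisProj (N : ℕ) : IsCompactOperator (basisProj b c N) :=
  Submodule.sum_mem (compactOperator (RingHom.id ℝ) G G) fun i _ => isCompactOperator_smulRight (c i) (b i)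

variable [Lattice G] [HasSolidNorm G] [IsOrderedAddMonoid G]

lemma OrderBasis.tendsto_basisProj (hb : OrderBasis b c) (x : G) :
    Tendsto (fun N => basisProj b c N x) atTop (𝓝 x) := by
  simpa only [basisProj_apply] using hb.1 x

lemma OrderBasis.coord_basisProj (hb : OrderBasis b c) (N n : ℕ) (x : G) :
    c n (basisProj b c N x) = if n ∈ Finset.range N then c n x else 0 := by
  simp only [basisProj_apply, map_sum, map_smul, smul_eq_mul, hb.2.1, mul_ite, mul_one, mul_zero,
    Finset.sum_ite_eq]

lemma OrderBasis.basisProj_nonneg (hb : OrderBasis b c) (N : ℕ) {x : G} (hx : 0 ≤ x) :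
    0 ≤ basisProj b c N x := by
  refine (hb.2.2 _).2 fun n => ?_
  rw [hb.coord_basisProj]
  split_ifs
  exacts [(hb.2.2 x).1 hx n, le_rfl]

lemma OrderBasis.basisProj_le (hb : OrderBasis b c) (N : ℕ) {x : G} (hx : 0 ≤ x) :
    basisProj b c N x ≤ x := by
  refine sub_nonneg.1 <| (hb.2.2 _).2 fun n => ?_
  rw [map_sub, hb.coord_basisProj]
  split_ifs
  exacts [(sub_self _).ge, by simpa using (hb.2.2 x).1 hx n]

end BasisProjection

section PositiveOperators

variable {E F : Type*}
  [NormedAddCommGroup E] [Lattice E] [HasSolidNorm E] [IsOrderedAddMonoid E] [NormedSpace ℝ E]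
  [NormedAddCommGroup F] [Lattice F] [HasSolidNorm F] [IsOrderedAddMonoid F] [NormedSpace ℝ F]

lemma isPosOp_sub_of_opLe {S T : E →L[ℝ] F} (h : OpLe S T) : IsPosOp (T - S) :=
  fun x hx => sub_nonneg.2 (h x hx)

lemma IsPosOp.inv_two_pow_smul {A : E →L[ℝ] F} (hA : IsPosOp A) (k : ℕ) :
    IsPosOp (((2 : ℝ) ^ k)⁻¹ • A) :=
  fun x hx => inv_two_pow_smul_nonneg (hA x hx) k

lemma isModulus_neg_of_isPosOp {A : E →L[ℝ] F} (hA : IsPosOp A) : IsModulus (-A) A :=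
  ⟨fun x hx => (neg_nonpos.2 (hA x hx)).trans (hA x hx), fun _ _ => by simp,
    fun S _ hS x hx => by simpa using hS x hx⟩

variable (E F) in
def PosCompactBallAbsSOTSeqClosed : Prop :=
  ∀ (Tn : ℕ → E →L[ℝ] F) (T : E →L[ℝ] F) (m : ℕ → E →L[ℝ] F),
    (∀ n, IsPosOp (Tn n) ∧ IsCompactOperator (Tn n) ∧ ‖Tn n‖ ≤ 1) →
    (∀ n, IsModulus (Tn n - T) (m n)) →
    (∀ x : E, 0 ≤ x → Tendsto (fun n => ‖m n x‖) atTop (𝓝 0)) →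
    IsPosOp T ∧ IsCompactOperator T ∧ ‖T‖ ≤ 1

structure IsPosCompactApprox (S : ℕ → E →L[ℝ] F) (T : E →L[ℝ] F) : Prop where
  isCompactOperator : ∀ n, IsCompactOperator (S n)
  isPosOp : ∀ n, IsPosOp (S n)
  opLe : ∀ n, OpLe (S n) T
  tendsto : ∀ x, Tendsto (fun n => S n x) atTop (𝓝 (T x))

lemma OrderBasis.isPosCompactApprox_comp_basisProj {b : ℕ → E} {c : ℕ → E →L[ℝ] ℝ}
    (hb : OrderBasis b c) {T : E →L[ℝ] F} (hT : IsPosOp T) :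
    IsPosCompactApprox (fun N => T.comp (basisProj b c N)) T where
  isCompactOperator N := (isCompactOperator_basisProj N).clm_comp T
  isPosOp N x hx := hT _ (hb.basisProj_nonneg N hx)
  opLe N x hx := sub_nonneg.1 <| by
    simpa using hT _ (sub_nonneg.2 (hb.basisProj_le N hx))
  tendsto x := (T.continuous.tendsto x).comp (hb.tendsto_basisProj x)

lemma OrderBasis.isPosCompactApprox_basisProj_comp {b : ℕ → F} {c : ℕ → F →L[ℝ] ℝ}
    (hb : OrderBasis b c) {T : E →L[ℝ] F} (hT : IsPosOp T) :
    IsPosCompactApprox (fun N => (basisProj b c N).comp T) T where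
  isCompactOperator N := (isCompactOperator_basisProj N).comp_clm T
  isPosOp N x hx := hb.basisProj_nonneg N (hT x hx)
  opLe N x hx := hb.basisProj_le N (hT x hx)
  tendsto x := hb.tendsto_basisProj (T x)

lemma IsPosCompactApprox.isCompactOperator_of_seqClosed [CompleteSpace E]
    {S : ℕ → E →L[ℝ] F} {T : E →L[ℝ] F} (hS : IsPosCompactApprox S T)
    (hclosed : PosCompactBallAbsSOTSeqClosed E F) : IsCompactOperator T := by
  obtain ⟨C, hC⟩ : ∃ C, ∀ n, ‖S n‖ ≤ C :=
    banach_steinhaus fun x => (hS.tendsto x).norm.bddAbove_range.imp fun _ h n => h ⟨n, rfl⟩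
  -- Scale by a power of `2`: positivity of real multiples is not part of the order structure,
  -- but halving preserves it (`nsmul_two_semiclosed`).
  obtain ⟨k, hk⟩ := pow_unbounded_of_one_lt C (one_lt_two : (1 : ℝ) < 2)
  set r : ℝ := ((2 : ℝ) ^ k)⁻¹ with hr
  have hball : ∀ n, IsPosOp (r • S n) ∧ IsCompactOperator (r • S n) ∧ ‖r • S n‖ ≤ 1 := by
    refine fun n => ⟨(hS.isPosOp n).inv_two_pow_smul k, (hS.isCompactOperator n).smul r, ?_⟩
    rw [norm_smul, hr, norm_inv, norm_pow, Real.norm_two, inv_mul_le_one₀ (by positivity)]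
    exact (hC n).trans hk.le
  have hmod : ∀ n, IsModulus (r • S n - r • T) (r • (T - S n)) := fun n => by
    rw [← smul_sub, ← neg_sub, smul_neg]
    exact isModulus_neg_of_isPosOp ((isPosOp_sub_of_opLe (hS.opLe n)).inv_two_pow_smul k)
  have hconv : ∀ x : E, 0 ≤ x → Tendsto (fun n => ‖(r • (T - S n)) x‖) atTop (𝓝 0) := by
    intro x _
    have := ((tendsto_const_nhds (x := T x)).sub (hS.tendsto x)).const_smul r
    simpa using this.norm
  simpa [hr, smul_smul] using (hclosed _ _ _ hball hmod hconv).2.1.smul ((2 : ℝ) ^ k)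

end PositiveOperators

theorem posOp_compact_of_ball_absSOT_seqClosed_general {E F : Type*}
    [NormedAddCommGroup E] [Lattice E] [HasSolidNorm E] [IsOrderedAddMonoid E] [NormedSpace ℝ E] [CompleteSpace E]
    [NormedAddCommGroup F] [Lattice F] [HasSolidNorm F] [IsOrderedAddMonoid F] [NormedSpace ℝ F]
    (hbasis : (∃ (b : ℕ → E) (c : ℕ → E →L[ℝ] ℝ), OrderBasis b c) ∨
      (OrderContNorm F ∧ ∃ (b : ℕ → F) (c : ℕ → F →L[ℝ] ℝ), OrderBasis b c))
    (hclosed : ∀ (Tn : ℕ → E →L[ℝ] F) (T : E →L[ℝ] F) (m : ℕ → E →L[ℝ] F),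
      (∀ n, IsPosOp (Tn n) ∧ IsCompactOperator (Tn n) ∧ ‖Tn n‖ ≤ 1) →
      (∀ n, IsModulus (Tn n - T) (m n)) →
      (∀ x : E, 0 ≤ x → Tendsto (fun n => ‖m n x‖) atTop (𝓝 0)) →
      IsPosOp T ∧ IsCompactOperator T ∧ ‖T‖ ≤ 1) :
    ∀ T : E →L[ℝ] F, IsPosOp T → IsCompactOperator T := by
  intro T hT
  rcases hbasis with ⟨b, c, hb⟩ | ⟨-, b, c, hb⟩
  · exact (hb.isPosCompactApprox_comp_basisProj hT).isCompactOperator_of_seqClosed hclosed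
  · exact (hb.isPosCompactApprox_basisProj_comp hT).isCompactOperator_of_seqClosed hclosed

/-- Let `E` be a reflexive Banach lattice and `F` a Dedekind complete Banach lattice, such
that the order of `E` is given by a basis, or `F` has order continuous norm with order given
by a basis.  If the unit ball of the positive compact operators is sequentially closed in
the absolute strong operator topology, then every positive operator `E → F` is compact. -/
theorem posOp_compact_of_ball_absSOT_seqClosed {E F : Type*}
    [NormedAddCommGroup E] [Lattice E] [HasSolidNorm E] [IsOrderedAddMonoid E] [NormedSpace ℝ E] [CompleteSpace E]
    [NormedAddCommGroup F] [Lattice F] [HasSolidNorm F] [IsOrderedAddMonoid F] [NormedSpace ℝ F] [CompleteSpace F]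
    (hrefl : Function.Surjective (inclusionInDoubleDual ℝ E))
    (hDed : ∀ A : Set F, A.Nonempty → BddAbove A → ∃ u : F, IsLUB A u)
    (hbasis : (∃ (b : ℕ → E) (c : ℕ → E →L[ℝ] ℝ), OrderBasis b c) ∨
      (OrderContNorm F ∧ ∃ (b : ℕ → F) (c : ℕ → F →L[ℝ] ℝ), OrderBasis b c))
    (hclosed : ∀ (Tn : ℕ → E →L[ℝ] F) (T : E →L[ℝ] F) (m : ℕ → E →L[ℝ] F),
      (∀ n, IsPosOp (Tn n) ∧ IsCompactOperator (Tn n) ∧ ‖Tn n‖ ≤ 1) →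
      (∀ n, IsModulus (Tn n - T) (m n)) →
      (∀ x : E, 0 ≤ x → Tendsto (fun n => ‖m n x‖) atTop (𝓝 0)) →
      IsPosOp T ∧ IsCompactOperator T ∧ ‖T‖ ≤ 1) :
    ∀ T : E →L[ℝ] F, IsPosOp T → IsCompactOperator T :=
  posOp_compact_of_ball_absSOT_seqClosed_general hbasis hclosed
end
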